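/- Let b ≥ 2 be an integer and p a prime with gcd(b,p) = 1, and let m ≥ 1. Let a_k denote the k-th base-b digit of the Stoneham number α_{b,p} = ∑_{j≥1} 1/(p^j·b^{p^j}), let N = ord_{p^m}(b) be the multiplicative order of b modulo p^m, and let q_1, …, q_N be the digits produced by the base-b algorithm for the fraction (∑_{j=0}^{m−1} p^j)/p^m. Then q_i = a_{p^m + jN + i} for every i ∈ {1, 2, …, N} and every j ∈ {0, 1, …, p·φ(p^m)/N − 1}. -/

import Mathlib

/-- The Stoneham number `α_{b,c} = ∑_{n≥1} 1/(c^n · b^(c^n))`. -/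
noncomputable def stoneham (b c : ℕ) : ℝ :=
  ∑' n : ℕ, 1 / ((c : ℝ) ^ (n + 1) * (b : ℝ) ^ (c ^ (n + 1)))

/-- The `k`-th base-`b` digit of a real number `x ∈ [0,1)`:
`digit b x k = ⌊x · b^k⌋ mod b`. -/
noncomputable def digit (b : ℕ) (x : ℝ) (k : ℕ) : ℕ :=
  (⌊x * (b : ℝ) ^ k⌋ % (b : ℤ)).toNat

/-!
Multiplying `α_{b,p}` by `b ^ (p ^ m + k)`, the first `m` terms of the series add up to
`A * b ^ k / p ^ m` for an integer `A`, while the remaining terms contribute less than `1 / p ^ m`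
as long as `p ^ m + k ≤ p ^ (m + 1)`. So the digit in position `p ^ m + k` is the `k`-th digit
of `A / p ^ m`. Because `φ (p ^ n)` divides `p ^ m - p ^ n`, Euler's theorem gives
`A ≡ 1 + p + ⋯ + p ^ (m - 1) [MOD p ^ m]`, and the digits of `A / p ^ m` have period `N`.
The admissible range of `j` is exactly what keeps `k = j * N + i` below
`p * φ (p ^ m) = p ^ (m + 1) - p ^ m`.
-/

open Finset

theorem Nat.mul_div_mod_eq_mod_mul_div (n b d : ℕ) : n * b / d % b = n % d * b / d := by
  rcases Nat.eq_zero_or_pos d with rfl | hd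
  · simp
  rcases Nat.eq_zero_or_pos b with rfl | hb
  · simp
  have hlt : n % d * b / d < b :=
    Nat.div_lt_of_lt_mul (Nat.mul_lt_mul_of_pos_right (Nat.mod_lt n hd) hb)
  have hsplit : n * b = d * (b * (n / d)) + n % d * b := by
    conv_lhs => rw [← Nat.div_add_mod n d]
    ring
  rw [hsplit, Nat.mul_add_div hd, Nat.mul_add_mod, Nat.mod_eq_of_lt hlt]

theorem Int.floor_natCast_div_add {n d : ℕ} {t : ℝ} (ht0 : 0 ≤ t) (ht : t < 1 / d) :
    ⌊(n : ℝ) / d + t⌋ = ((n / d : ℕ) : ℤ) := by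
  rcases Nat.eq_zero_or_pos d with rfl | hd
  · simp at ht; linarith
  have hd' : (0 : ℝ) < d := by exact_mod_cast hd
  have htd : ⌊t * d⌋ = 0 := Int.floor_eq_zero_iff.mpr
    ⟨by positivity, by rwa [← lt_div_iff₀ hd']⟩
  rw [show (n : ℝ) / d + t = (n + t * d) / d by field_simp, Int.floor_div_natCast,
    Int.floor_natCast_add, htd, add_zero, Int.natCast_div]

theorem Nat.totient_dvd_pow_sub_pow {p : ℕ} (hp : p.Prime) {n m : ℕ} (hn : n ≤ m) :
    Nat.totient (p ^ n) ∣ p ^ m - p ^ n := by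
  rcases n with _ | n
  · simp
  have hsub : p ^ m - p ^ (n + 1) = p ^ (n + 1) * (p ^ (m - (n + 1)) - 1) := by
    rw [Nat.mul_sub_one, ← pow_add, Nat.add_sub_cancel' hn]
  rw [Nat.totient_prime_pow_succ hp, hsub]
  exact mul_dvd_mul (pow_dvd_pow p n.le_succ) (Nat.sub_one_dvd_pow_sub_one p _)

theorem orderOf_natCast_dvd_totient {b n : ℕ} (h : b.Coprime n) :
    orderOf (b : ZMod n) ∣ Nat.totient n :=
  orderOf_dvd_of_pow_eq_one <| by
    simpa using (ZMod.natCast_eq_natCast_iff _ _ _).mpr (Nat.ModEq.pow_totient h)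

theorem Nat.pow_add_mul_totient_pow {p : ℕ} (hp : p.Prime) {m : ℕ} (hm : 1 ≤ m) :
    p ^ m + p * Nat.totient (p ^ m) = p ^ (m + 1) := by
  obtain ⟨m, rfl⟩ := Nat.exists_eq_add_of_le' hm
  rw [Nat.totient_prime_pow_succ hp, ← mul_assoc, ← pow_succ', add_comm, ← Nat.mul_add_one,
    Nat.sub_add_cancel hp.one_lt.le, ← pow_succ]

theorem Nat.mul_add_le_of_le_div_sub_one {i j N T : ℕ} (hiN : i ≤ N) (hNT : N ≤ T)
    (hj : j ≤ T / N - 1) : j * N + i ≤ T := by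
  rcases Nat.eq_zero_or_pos N with rfl | hN
  · omega
  have : 1 ≤ T / N := (Nat.one_le_div_iff hN).mpr hNT
  calc j * N + i ≤ (j + 1) * N := by nlinarith
    _ ≤ T / N * N := Nat.mul_le_mul_right _ (by omega)
    _ ≤ T := Nat.div_mul_le_self T N

noncomputable def stonehamTerm (b c n : ℕ) : ℝ :=
  1 / ((c : ℝ) ^ (n + 1) * (b : ℝ) ^ (c ^ (n + 1)))

theorem stoneham_eq_tsum (b c : ℕ) : stoneham b c = ∑' n, stonehamTerm b c n := rfl

theorem stonehamTerm_nonneg (b c n : ℕ) : 0 ≤ stonehamTerm b c n := by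
  unfold stonehamTerm; positivity

theorem stonehamTerm_mul_pow_eq (b c n K : ℕ) :
    stonehamTerm b c n * (b : ℝ) ^ K =
      (1 / c : ℝ) ^ (n + 1) * ((b : ℝ) ^ K / (b : ℝ) ^ (c ^ (n + 1))) := by
  unfold stonehamTerm; ring

theorem stonehamTerm_mul_pow_le {b c n K : ℕ} (hb : 1 ≤ b) (hK : K ≤ c ^ (n + 1)) :
    stonehamTerm b c n * (b : ℝ) ^ K ≤ (1 / c : ℝ) ^ (n + 1) := by
  have hb' : (1 : ℝ) ≤ b := by exact_mod_cast hb
  rw [stonehamTerm_mul_pow_eq]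
  exact mul_le_of_le_one_right (by positivity)
    (div_le_one_of_le₀ (pow_le_pow_right₀ hb' hK) (by positivity))

theorem stonehamTerm_mul_pow_lt {b c n K : ℕ} (hb : 2 ≤ b) (hK : K < c ^ (n + 1)) :
    stonehamTerm b c n * (b : ℝ) ^ K < (1 / c : ℝ) ^ (n + 1) := by
  have hc : 0 < c := Nat.pos_of_ne_zero (by rintro rfl; simp at hK)
  have hb' : (1 : ℝ) < b := by exact_mod_cast hb
  rw [stonehamTerm_mul_pow_eq]
  exact mul_lt_of_lt_one_right (by positivity)
    ((div_lt_one (by positivity)).mpr (pow_lt_pow_right₀ hb' hK))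

theorem summable_one_div_pow_add {c : ℕ} (hc : 2 ≤ c) (m : ℕ) :
    Summable fun n => (1 / c : ℝ) ^ (n + m) := by
  have hc' : (2 : ℝ) ≤ c := by exact_mod_cast hc
  refine (summable_nat_add_iff m).mpr (summable_geometric_of_lt_one (by positivity) ?_)
  rw [div_lt_one (by positivity)]; linarith

theorem summable_stonehamTerm {b c : ℕ} (hb : 1 ≤ b) (hc : 2 ≤ c) :
    Summable (stonehamTerm b c) :=
  .of_nonneg_of_le (stonehamTerm_nonneg b c)
    (fun n => by simpa using stonehamTerm_mul_pow_le (n := n) hb (Nat.zero_le _))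
    (summable_one_div_pow_add hc 1)

theorem tsum_stonehamTerm_add_mul_pow_lt {b c m K : ℕ} (hb : 2 ≤ b) (hc : 2 ≤ c)
    (hK : K ≤ c ^ (m + 1)) :
    (∑' n, stonehamTerm b c (n + m)) * (b : ℝ) ^ K < 1 / (c : ℝ) ^ m := by
  have hc' : (2 : ℝ) ≤ c := by exact_mod_cast hc
  rw [← tsum_mul_right]
  calc ∑' n, stonehamTerm b c (n + m) * (b : ℝ) ^ K
        < ∑' n, (1 / c : ℝ) ^ (n + (m + 1)) := by
        refine Summable.tsum_lt_tsum_of_nonneg (i := 1)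
          (fun n => mul_nonneg (stonehamTerm_nonneg _ _ _) (by positivity))
          (fun n => stonehamTerm_mul_pow_le (by omega) (hK.trans ?_))
          (stonehamTerm_mul_pow_lt hb (hK.trans_lt ?_)) (summable_one_div_pow_add hc _)
        · exact Nat.pow_le_pow_right (by omega) (by omega)
        · exact Nat.pow_lt_pow_right (by omega) (by omega)
    _ = 1 / c ^ m * (1 / (c - 1)) := by
        simp_rw [pow_add, tsum_mul_right]
        rw [tsum_geometric_of_lt_one (by positivity) (by rw [div_lt_one (by positivity)]; linarith)]
        have hc1 : (c : ℝ) - 1 ≠ 0 := by linarith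
        simp only [one_div_pow]
        field_simp
    _ ≤ 1 / c ^ m :=
        mul_le_of_le_one_right (by positivity) (by rw [div_le_one (by linarith)]; linarith)

def stonehamNumerator (b c m : ℕ) : ℕ :=
  ∑ n ∈ range m, b ^ (c ^ m - c ^ (n + 1)) * c ^ (m - (n + 1))

theorem sum_range_stonehamTerm_mul_pow {b c : ℕ} (hb : b ≠ 0) (hc : c ≠ 0) (m : ℕ) :
    (∑ n ∈ range m, stonehamTerm b c n) * (b : ℝ) ^ (c ^ m) =
      stonehamNumerator b c m / (c : ℝ) ^ m := by
  rw [Finset.sum_mul, stonehamNumerator, Nat.cast_sum, Finset.sum_div]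
  refine Finset.sum_congr rfl fun n hn => ?_
  have hnm : n + 1 ≤ m := Finset.mem_range.mp hn
  push_cast
  have hb' : (b : ℝ) ≠ 0 := by exact_mod_cast hb
  have hc' : (c : ℝ) ≠ 0 := by exact_mod_cast hc
  rw [pow_sub₀ (b : ℝ) hb' (Nat.pow_le_pow_right (Nat.pos_of_ne_zero hc) hnm),
    pow_sub₀ (c : ℝ) hc' hnm]
  unfold stonehamTerm
  field_simp

theorem digit_stoneham_pow_add {b c m k : ℕ} (hb : 2 ≤ b) (hc : 2 ≤ c)
    (hk : c ^ m + k ≤ c ^ (m + 1)) :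
    digit b (stoneham b c) (c ^ m + k) = stonehamNumerator b c m * b ^ k / c ^ m % b := by
  have hsplit : stoneham b c * (b : ℝ) ^ (c ^ m + k) =
      ((stonehamNumerator b c m * b ^ k : ℕ) : ℝ) / (c ^ m : ℕ) +
        (∑' n, stonehamTerm b c (n + m)) * (b : ℝ) ^ (c ^ m + k) := by
    rw [stoneham_eq_tsum, ← (summable_stonehamTerm (by omega) hc).sum_add_tsum_nat_add m,
      add_mul, pow_add, ← mul_assoc, sum_range_stonehamTerm_mul_pow (by omega) (by omega)]
    push_cast
    ring
  have htail := tsum_stonehamTerm_add_mul_pow_lt hb hc hk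
  rw [digit, hsplit, Int.floor_natCast_div_add
    (mul_nonneg (tsum_nonneg fun n => stonehamTerm_nonneg _ _ _) (by positivity))
    (by simpa using htail), ← Int.natCast_mod, Int.toNat_natCast]

theorem stonehamNumerator_modEq {b p : ℕ} (hp : p.Prime) (hbp : b.Coprime p) (m : ℕ) :
    stonehamNumerator b p m ≡ ∑ j ∈ range m, p ^ j [MOD p ^ m] := by
  rw [← Finset.sum_range_reflect]
  refine Nat.ModEq.sum fun n hn => ?_
  have hnm : n + 1 ≤ m := Finset.mem_range.mp hn
  have hunit : b ^ (p ^ m - p ^ (n + 1)) ≡ 1 [MOD p ^ (n + 1)] := by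
    obtain ⟨t, ht⟩ := Nat.totient_dvd_pow_sub_pow hp hnm
    rw [ht, pow_mul]
    simpa using (Nat.ModEq.pow_totient (hbp.pow_right (n + 1))).pow t
  have h := hunit.mul_right' (p ^ (m - (n + 1)))
  rw [show m - 1 - n = m - (n + 1) by omega]
  rwa [one_mul, ← pow_add, Nat.add_sub_cancel' hnm] at h

theorem stmt12 (b p m : ℕ) (hb : 2 ≤ b) (hp : p.Prime) (hbp : Nat.Coprime b p)
    (hm : 1 ≤ m)
    (N : ℕ) (hN : N = orderOf (b : ZMod (p ^ m)))
    (a : ℕ) (ha : a = ∑ j ∈ Finset.range m, p ^ j)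
    (q : ℕ → ℕ)
    (hq : ∀ i, 1 ≤ i → q i = (a * b ^ (i - 1) % p ^ m) * b / p ^ m) :
    ∀ i, 1 ≤ i → i ≤ N → ∀ j, j ≤ p * Nat.totient (p ^ m) / N - 1 →
      q i = digit b (stoneham b p) (p ^ m + j * N + i) := by
  intro i hi hiN j hj
  obtain ⟨i, rfl⟩ : ∃ i', i = i' + 1 := ⟨i - 1, by omega⟩
  have hN_le : N ≤ p * Nat.totient (p ^ m) := hN ▸
    (Nat.le_of_dvd (Nat.totient_pos.mpr (pow_pos hp.pos m))
      (orderOf_natCast_dvd_totient (hbp.pow_right m))).trans (Nat.le_mul_of_pos_left _ hp.pos)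
  have hk : p ^ m + (j * N + i + 1) ≤ p ^ (m + 1) := by
    rw [← Nat.pow_add_mul_totient_pow hp hm]
    exact Nat.add_le_add_left (Nat.mul_add_le_of_le_div_sub_one hiN hN_le hj) _
  have hbN : b ^ N ≡ 1 [MOD p ^ m] :=
    (ZMod.natCast_eq_natCast_iff _ _ _).mp (by rw [hN]; push_cast; exact pow_orderOf_eq_one _)
  have hcong : stonehamNumerator b p m * b ^ (j * N + i) ≡ a * b ^ i [MOD p ^ m] := by
    rw [ha, pow_add, pow_mul']
    exact (stonehamNumerator_modEq hp hbp m).mul (by simpa using (hbN.pow j).mul_right (b ^ i))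
  rw [show p ^ m + j * N + (i + 1) = p ^ m + (j * N + i + 1) by ring,
    digit_stoneham_pow_add hb hp.two_le hk, pow_succ, ← mul_assoc, Nat.mul_div_mod_eq_mod_mul_div,
    hcong, hq _ le_add_self, Nat.add_sub_cancel]
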